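/- Let Ψ be a positive definite (n+v)×(n+v) matrix partitioned into blocks Ψ₁₁ (n×n), Ψ₁₂ = Ψ₂₁^⊤ (n×v), Ψ₂₂ (v×v), let ξ = (ξ₁, ξ₂) ∈ ℝ^{n+v} and λ̄ ∈ ℝ^{n+v}, write (υ^{(1)}, υ^{(2)}) = Ψ^{-1/2} λ̄ with υ^{(1)} ∈ ℝ^n, υ^{(2)} ∈ ℝ^v, and set Ψ₂₂.₁ = Ψ₂₂ − Ψ₂₁ Ψ₁₁^{-1} Ψ₁₂ and υ̃ = (υ^{(1)} + Ψ₁₁^{-1} Ψ₁₂ υ^{(2)}) / √(1 + υ^{(2)⊤} Ψ₂₂.₁ υ^{(2)}). Then integrating the (n+v)-dimensional skew-normal density over the last block gives an n-dimensional skew-normal density: for every y₁ ∈ ℝ^n, ∫_{ℝ^v} 2 φ_{n+v}((y₁, y₂); ξ, Ψ) Φ(λ̄^⊤ Ψ^{-1/2}((y₁, y₂) − ξ)) dy₂ = 2 φ_n(y₁; ξ₁, Ψ₁₁) Φ(υ̃^⊤(y₁ − ξ₁)). -/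

import Mathlib

open MeasureTheory Matrix Real

/-- Multivariate normal density `φ_k(y; μ, S)`. -/
noncomputable def mvnPdf {k : Type*} [Fintype k] [DecidableEq k]
    (μ : k → ℝ) (S : Matrix k k ℝ) (y : k → ℝ) : ℝ :=
  (2 * Real.pi) ^ (-(Fintype.card k : ℝ) / 2) * S.det ^ (-(1 : ℝ) / 2) *
    Real.exp (-((y - μ) ⬝ᵥ (S⁻¹ *ᵥ (y - μ))) / 2)

/-- Standard univariate normal cumulative distribution function `Φ`. -/
noncomputable def stdCDF (x : ℝ) : ℝ :=
  ∫ t in Set.Iic x, (Real.sqrt (2 * Real.pi))⁻¹ * Real.exp (-t ^ 2 / 2)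

/-- Inverse of the positive definite square root, `S^{-1/2}`. -/
noncomputable def invSqrt {k : Type*} [Fintype k] [DecidableEq k]
    {S : Matrix k k ℝ} (hS : S.PosDef) : Matrix k k ℝ :=
  ((hS.posSemidef.1.eigenvectorUnitary : Matrix k k ℝ) *
    Matrix.diagonal (Real.sqrt ∘ hS.posSemidef.1.eigenvalues) *
    star (hS.posSemidef.1.eigenvectorUnitary : Matrix k k ℝ))⁻¹

/-!
Conditioning on the first block factorises the joint density:
`φ_{n+v}((y₁, y₂); ξ, Ψ) = φ_n(y₁; ξ₁, Ψ₁₁) φ_v(y₂; ξ₂ + Ψ₂₁ Ψ₁₁⁻¹ (y₁ - ξ₁), Ψ₂₂.₁)`,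
and the argument of `Φ` is affine in `y₂` with slope `υ⁽²⁾`. It remains to compute
`E Φ(α + uᵀY) = Φ((α + uᵀm) / √(1 + uᵀSu))` for `Y ~ N(m, S)`. Writing `Y = m + RZ` with
`RRᵀ = S` and `Z` standard normal, `Φ(α + uᵀY)` is the probability that an independent standard
normal `T` satisfies `T - (Rᵀu)ᵀZ ≤ α + uᵀm`, and `T - (Rᵀu)ᵀZ` is centred normal with variance
`1 + uᵀSu`.
-/

open ProbabilityTheory Set
open scoped NNReal

lemma stdCDF_eq_gaussianReal (x : ℝ) : stdCDF x = (gaussianReal 0 1).real (Iic x) := by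
  rw [measureReal_def, gaussianReal_apply_eq_integral _ one_ne_zero,
    ENNReal.toReal_ofReal
      (setIntegral_nonneg measurableSet_Iic fun _ _ ↦ gaussianPDFReal_nonneg ..)]
  simp [stdCDF, gaussianPDFReal]

lemma gaussianReal_real_Iic {v : ℝ≥0} (hv : v ≠ 0) (a : ℝ) :
    (gaussianReal 0 v).real (Iic a) = stdCDF (a / √v) := by
  have hs : 0 < √(v : ℝ) := Real.sqrt_pos.2 (by positivity)
  have hmap : (gaussianReal 0 1).map (√(v : ℝ) * ·) = gaussianReal 0 v := by
    rw [gaussianReal_map_const_mul]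
    congr 1
    · simp
    · ext; simp
  rw [stdCDF_eq_gaussianReal, ← hmap, map_measureReal_apply (by fun_prop) measurableSet_Iic]
  congr 1
  ext x
  simp [le_div_iff₀' hs]

lemma map_dotProduct_pi_gaussianReal {ι : Type*} [Fintype ι] (w : ι → ℝ) :
    (Measure.pi fun _ : ι ↦ gaussianReal 0 1).map (w ⬝ᵥ ·) =
      gaussianReal 0 (w ⬝ᵥ w).toNNReal := by
  set L : StrongDual ℝ (EuclideanSpace ℝ ι) := innerSL ℝ (WithLp.toLp 2 w)
  have hL : (w ⬝ᵥ ·) = L ∘ WithLp.toLp 2 := by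
    ext z; simp [L, EuclideanSpace.inner_eq_star_dotProduct, dotProduct_comm]
  rw [hL, ← Measure.map_map (by fun_prop) (by fun_prop), map_pi_eq_stdGaussian,
    IsGaussian.map_eq_gaussianReal, integral_strongDual_stdGaussian, variance_dual_stdGaussian,
    innerSL_apply_norm, EuclideanSpace.real_norm_sq_eq]
  simp [dotProduct, sq]

lemma integral_stdCDF_add_dotProduct {k : ℕ} (a : ℝ) (w : Fin k → ℝ) :
    ∫ z, stdCDF (a + w ⬝ᵥ z) ∂(Measure.pi fun _ ↦ gaussianReal 0 1) =
      stdCDF (a / √(1 + w ⬝ᵥ w)) := by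
  set w' : Fin (k + 1) → ℝ := Fin.cons 1 (-w)
  have hw' : w' ⬝ᵥ w' = 1 + w ⬝ᵥ w := by simp [w', dotProduct, Fin.sum_univ_succ]
  have hw'_pos : 0 < w' ⬝ᵥ w' := hw' ▸ add_pos_of_pos_of_nonneg one_pos
    (Finset.sum_nonneg fun i _ ↦ mul_self_nonneg (w i))
  set s : Set (ℝ × (Fin k → ℝ)) := {p | p.1 - w ⬝ᵥ p.2 ≤ a}
  have hs : MeasurableSet s := measurableSet_le (by fun_prop) (by fun_prop)
  have hsplit := measurePreserving_piFinSuccAbove (fun _ : Fin (k + 1) ↦ gaussianReal 0 1) 0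
  calc ∫ z, stdCDF (a + w ⬝ᵥ z) ∂(Measure.pi fun _ ↦ gaussianReal 0 1)
      = ∫ z, ((gaussianReal 0 1) ((fun t ↦ (t, z)) ⁻¹' s)).toReal
          ∂(Measure.pi fun _ ↦ gaussianReal 0 1) := by
        congr with z
        rw [stdCDF_eq_gaussianReal, measureReal_def]
        congr 2
        ext t
        simp [s]
    _ = ((gaussianReal 0 1).prod (Measure.pi fun _ : Fin k ↦ gaussianReal 0 1)).real s := by
        rw [measureReal_def, Measure.prod_apply_symm hs,
          integral_toReal (measurable_measure_prodMk_right hs).aemeasurable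
            (ae_of_all _ fun _ ↦ measure_lt_top _ _)]
    _ = (Measure.pi fun _ : Fin (k + 1) ↦ gaussianReal 0 1).real {x | w' ⬝ᵥ x ≤ a} := by
        rw [measureReal_def, measureReal_def, ← hsplit.measure_preimage hs.nullMeasurableSet]
        congr 2
        ext x
        simp [s, w', dotProduct, Fin.sum_univ_succ, MeasurableEquiv.piFinSuccAbove_apply,
          Fin.tail, sub_eq_add_neg]
    _ = (gaussianReal 0 (w' ⬝ᵥ w').toNNReal).real (Iic a) := by
        rw [← map_dotProduct_pi_gaussianReal,
          map_measureReal_apply (by fun_prop) measurableSet_Iic]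
        rfl
    _ = stdCDF (a / √(1 + w ⬝ᵥ w)) := by
        rw [gaussianReal_real_Iic (by simpa using hw'_pos), Real.coe_toNNReal _ hw'_pos.le, hw']

lemma pi_gaussianReal_eq_withDensity {ι : Type*} [Fintype ι] :
    Measure.pi (fun _ : ι ↦ gaussianReal 0 1) =
      volume.withDensity fun z ↦ ENNReal.ofReal (∏ i, gaussianPDFReal 0 1 (z i)) := by
  refine Measure.pi_eq fun s hs ↦ ?_
  have hint : Integrable (fun z : ι → ℝ ↦ ∏ i, gaussianPDFReal 0 1 (z i))
      (Measure.pi fun i ↦ volume.restrict (s i)) :=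
    Integrable.fintype_prod fun i ↦ (integrable_gaussianPDFReal 0 1).restrict
  rw [withDensity_apply _ (MeasurableSet.univ_pi hs), volume_pi, Measure.restrict_pi_pi,
    ← ofReal_integral_eq_lintegral_ofReal hint
      (ae_of_all _ fun z ↦ Finset.prod_nonneg fun i _ ↦ gaussianPDFReal_nonneg ..),
    integral_fintype_prod_eq_prod, ENNReal.ofReal_prod_of_nonneg
      fun i _ ↦ setIntegral_nonneg_of_ae (ae_of_all _ fun _ ↦ gaussianPDFReal_nonneg ..)]
  simp_rw [gaussianReal_apply_eq_integral 0 one_ne_zero]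

lemma integral_pi_gaussianReal {ι : Type*} [Fintype ι] (f : (ι → ℝ) → ℝ) :
    ∫ z, f z ∂(Measure.pi fun _ ↦ gaussianReal 0 1) =
      ∫ z, (∏ i, gaussianPDFReal 0 1 (z i)) * f z := by
  rw [pi_gaussianReal_eq_withDensity, integral_withDensity_eq_integral_toReal_smul
    (by fun_prop) (ae_of_all _ fun _ ↦ ENNReal.ofReal_lt_top)]
  simp_rw [ENNReal.toReal_ofReal (Finset.prod_nonneg fun i _ ↦ gaussianPDFReal_nonneg ..),
    smul_eq_mul]

lemma integral_comp_mulVec {ι : Type*} [Fintype ι] [DecidableEq ι] {R : Matrix ι ι ℝ}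
    (hR : R.det ≠ 0) (g : (ι → ℝ) → ℝ) :
    ∫ z, g (R *ᵥ z) = |R.det|⁻¹ * ∫ y, g y := by
  have hdet : LinearMap.det (toLin' R) ≠ 0 := by rwa [LinearMap.det_toLin']
  have he : MeasurableEmbedding (toLin' R) :=
    ((toLin' R).equivOfDetNeZero hdet).toContinuousLinearEquiv.toHomeomorph.measurableEmbedding
  calc ∫ z, g (R *ᵥ z) = ∫ z, g (toLin' R z) := rfl
    _ = ∫ y, g y ∂(Measure.map (toLin' R) volume) := (he.integral_map g).symm
    _ = |R.det|⁻¹ * ∫ y, g y := by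
      rw [Real.map_matrix_volume_pi_eq_smul_volume_pi hR, integral_smul_measure,
        ENNReal.toReal_ofReal (abs_nonneg _), abs_inv, smul_eq_mul]

section mvnPdf

variable {ι : Type*} [Fintype ι] [DecidableEq ι]

lemma mvnPdf_zero_one (z : ι → ℝ) : mvnPdf 0 1 z = ∏ i, gaussianPDFReal 0 1 (z i) := by
  have hpow : (2 * π) ^ (-(Fintype.card ι : ℝ) / 2) = (√(2 * π))⁻¹ ^ Fintype.card ι := by
    rw [sqrt_eq_rpow, ← rpow_natCast, inv_rpow (by positivity), ← rpow_mul (by positivity),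
      ← rpow_neg (by positivity)]
    ring_nf
  simp only [mvnPdf, gaussianPDFReal, Finset.prod_mul_distrib, Finset.prod_const, ← exp_sum,
    det_one, one_rpow, inv_one, one_mulVec, sub_zero, hpow, mul_one, NNReal.coe_one,
    Finset.card_univ]
  congr 2
  simp [dotProduct, Finset.sum_div, sq, neg_div]

lemma mvnPdf_mul_transpose_add_mulVec {R : Matrix ι ι ℝ} (hR : R.det ≠ 0) (m z : ι → ℝ) :
    mvnPdf m (R * Rᵀ) (m + R *ᵥ z) = |R.det|⁻¹ * mvnPdf 0 1 z := by
  have hRu : IsUnit R.det := hR.isUnit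
  have hRTu : IsUnit Rᵀ.det := by rwa [det_transpose]
  have hquad : (R *ᵥ z) ⬝ᵥ ((R * Rᵀ)⁻¹ *ᵥ (R *ᵥ z)) = z ⬝ᵥ z := by
    rw [Matrix.mul_inv_rev, mulVec_mulVec, Matrix.mul_assoc, nonsing_inv_mul _ hRu, Matrix.mul_one,
      ← vecMul_transpose, ← dotProduct_mulVec, mulVec_mulVec, mul_nonsing_inv _ hRTu,
      one_mulVec]
  have hdet : (R * Rᵀ).det ^ (-(1 : ℝ) / 2) = |R.det|⁻¹ := by
    rw [det_mul, det_transpose, ← abs_mul_abs_self, ← sq, ← rpow_natCast,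
      ← rpow_mul (abs_nonneg _)]
    norm_num [rpow_neg_one]
  simp only [mvnPdf, add_sub_cancel_left, hquad, hdet, det_one, one_rpow, inv_one, one_mulVec,
    sub_zero]
  ring

lemma integral_mvnPdf_mul_eq_integral_pi_gaussianReal {R : Matrix ι ι ℝ} (hR : R.det ≠ 0)
    (m : ι → ℝ) (f : (ι → ℝ) → ℝ) :
    ∫ y, mvnPdf m (R * Rᵀ) y * f y =
      ∫ z, f (m + R *ᵥ z) ∂(Measure.pi fun _ ↦ gaussianReal 0 1) := by
  calc ∫ y, mvnPdf m (R * Rᵀ) y * f y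
      = ∫ y, mvnPdf m (R * Rᵀ) (m + y) * f (m + y) := (integral_add_left_eq_self _ m).symm
    _ = |R.det| * ∫ z, mvnPdf m (R * Rᵀ) (m + R *ᵥ z) * f (m + R *ᵥ z) := by
        rw [integral_comp_mulVec hR fun y ↦ mvnPdf m (R * Rᵀ) (m + y) * f (m + y),
          mul_inv_cancel_left₀ (abs_ne_zero.2 hR)]
    _ = ∫ z, mvnPdf 0 1 z * f (m + R *ᵥ z) := by
        rw [← integral_const_mul]
        congr with z
        rw [mvnPdf_mul_transpose_add_mulVec hR, ← mul_assoc,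
          mul_inv_cancel_left₀ (abs_ne_zero.2 hR)]
    _ = ∫ z, f (m + R *ᵥ z) ∂(Measure.pi fun _ ↦ gaussianReal 0 1) := by
        simp_rw [integral_pi_gaussianReal, mvnPdf_zero_one]

end mvnPdf

open scoped MatrixOrder in
lemma Matrix.PosDef.exists_eq_mul_transpose {ι : Type*} [Fintype ι] [DecidableEq ι]
    {S : Matrix ι ι ℝ} (hS : S.PosDef) : ∃ R : Matrix ι ι ℝ, R.det ≠ 0 ∧ S = R * Rᵀ := by
  obtain ⟨B, hB⟩ := CStarAlgebra.nonneg_iff_eq_star_mul_self.mp hS.posSemidef.nonneg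
  have hSB : S = Bᵀ * B := by simpa [star_eq_conjTranspose] using hB
  refine ⟨Bᵀ, fun h ↦ hS.det_pos.ne' ?_, by rw [transpose_transpose, hSB]⟩
  rw [hSB, det_mul, h, zero_mul]

lemma integral_mvnPdf_mul_stdCDF {k : ℕ} {S : Matrix (Fin k) (Fin k) ℝ} (hS : S.PosDef)
    (m u : Fin k → ℝ) (α : ℝ) :
    ∫ y, mvnPdf m S y * stdCDF (α + u ⬝ᵥ y) =
      stdCDF ((α + u ⬝ᵥ m) / √(1 + u ⬝ᵥ (S *ᵥ u))) := by
  obtain ⟨R, hR, rfl⟩ := hS.exists_eq_mul_transpose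
  have harg : ∀ z, α + u ⬝ᵥ (m + R *ᵥ z) = (α + u ⬝ᵥ m) + (Rᵀ *ᵥ u) ⬝ᵥ z := fun z ↦ by
    rw [dotProduct_add, dotProduct_mulVec, ← mulVec_transpose, add_assoc]
  have hquad : (Rᵀ *ᵥ u) ⬝ᵥ (Rᵀ *ᵥ u) = u ⬝ᵥ ((R * Rᵀ) *ᵥ u) := by
    rw [← mulVec_mulVec, dotProduct_mulVec u, mulVec_transpose, dotProduct_comm]
  simp_rw [integral_mvnPdf_mul_eq_integral_pi_gaussianReal hR, harg,
    integral_stdCDF_add_dotProduct, hquad]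

namespace Matrix

lemma PosDef.toBlocks₁₁ {R m n : Type*} [Ring R] [PartialOrder R] [StarRing R]
    {M : Matrix (m ⊕ n) (m ⊕ n) R} (hM : M.PosDef) : M.toBlocks₁₁.PosDef :=
  hM.submatrix Sum.inl_injective

variable {m n : Type*} [Fintype m] [Fintype n] [DecidableEq m] [DecidableEq n]
  {A : Matrix m m ℝ} {B : Matrix m n ℝ} {D : Matrix n n ℝ}

lemma det_fromBlocks_of_isUnit_det₁₁ {C : Matrix n m ℝ} (hA : IsUnit A.det) :
    (fromBlocks A B C D).det = A.det * (D - C * A⁻¹ * B).det := by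
  have := A.invertibleOfIsUnitDet hA
  rw [det_fromBlocks₁₁, invOf_eq_nonsing_inv]

lemma PosDef.schur_of_fromBlocks (h : (fromBlocks A B Bᵀ D).PosDef) :
    (D - Bᵀ * A⁻¹ * B).PosDef := by
  have hA : A.PosDef := by simpa using h.toBlocks₁₁
  have := hA.isUnit.invertible
  have hpsd := (PosDef.fromBlocks₁₁ B D hA).1 (by simpa using h.posSemidef)
  rw [conjTranspose_eq_transpose_of_trivial] at hpsd
  refine hpsd.posDef_iff_det_ne_zero.2 fun h0 ↦ h.det_pos.ne' ?_
  rw [det_fromBlocks_of_isUnit_det₁₁ hA.det_pos.ne'.isUnit, h0, mul_zero]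

lemma sumElim_dotProduct_inv_fromBlocks_mulVec (h : (fromBlocks A B Bᵀ D).PosDef)
    (x : m → ℝ) (y : n → ℝ) :
    (x ⊕ᵥ y) ⬝ᵥ ((fromBlocks A B Bᵀ D)⁻¹ *ᵥ (x ⊕ᵥ y)) =
      x ⬝ᵥ (A⁻¹ *ᵥ x) +
        (y - (Bᵀ * A⁻¹) *ᵥ x) ⬝ᵥ ((D - Bᵀ * A⁻¹ * B)⁻¹ *ᵥ (y - (Bᵀ * A⁻¹) *ᵥ x)) := by
  have hA : A.PosDef := by simpa using h.toBlocks₁₁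
  have hS := h.schur_of_fromBlocks
  set S := D - Bᵀ * A⁻¹ * B
  have := hA.isUnit.invertible
  have := h.isUnit.invertible
  have := hS.inv.isUnit.invertible
  have : Invertible (D - Bᵀ * ⅟A * B) := by rw [invOf_eq_nonsing_inv]; exact hS.isUnit.invertible
  have hSu : IsUnit S.det := hS.det_pos.ne'.isUnit
  have hQ : (-(A⁻¹ * B * S⁻¹))ᴴ = -(S⁻¹ * Bᵀ * A⁻¹) := by
    rw [conjTranspose_neg, conjTranspose_mul, conjTranspose_mul, hA.1.inv.eq, hS.1.inv.eq,
      conjTranspose_eq_transpose_of_trivial, Matrix.mul_assoc]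
  have hinv : (fromBlocks A B Bᵀ D)⁻¹ = fromBlocks (A⁻¹ + A⁻¹ * B * S⁻¹ * Bᵀ * A⁻¹)
      (-(A⁻¹ * B * S⁻¹)) (-(S⁻¹ * Bᵀ * A⁻¹)) S⁻¹ := by
    rw [← invOf_eq_nonsing_inv, invOf_fromBlocks₁₁_eq]
    simp only [invOf_eq_nonsing_inv, S]
  have hSS : S * -(S⁻¹ * Bᵀ * A⁻¹) = -(Bᵀ * A⁻¹) := by
    rw [Matrix.mul_neg, ← Matrix.mul_assoc, ← Matrix.mul_assoc, mul_nonsing_inv _ hSu,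
      Matrix.one_mul]
  have hA' : A⁻¹ + A⁻¹ * B * S⁻¹ * Bᵀ * A⁻¹ - -(A⁻¹ * B * S⁻¹) * S * -(S⁻¹ * Bᵀ * A⁻¹) =
      A⁻¹ := by
    simp only [Matrix.neg_mul, Matrix.mul_neg, neg_neg, Matrix.mul_assoc,
      nonsing_inv_mul_cancel_left _ _ hSu]
    rw [add_sub_cancel_right]
  -- the inverse has lower-right block `S⁻¹`, and its Schur complement with respect to it is `A⁻¹`
  have key := schur_complement_eq₂₂ (A⁻¹ + A⁻¹ * B * S⁻¹ * Bᵀ * A⁻¹) (-(A⁻¹ * B * S⁻¹)) x y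
    hS.inv.1
  rw [nonsing_inv_nonsing_inv _ hSu, hQ, hSS, hA'] at key
  simp only [star_trivial, neg_mulVec, neg_add_eq_sub] at key
  rw [dotProduct_mulVec, hinv, key, ← dotProduct_mulVec, ← dotProduct_mulVec, add_comm]

end Matrix

section Blocks

variable {m n : Type*} [Fintype m] [Fintype n] [DecidableEq m] [DecidableEq n]
  {A : Matrix m m ℝ} {B : Matrix m n ℝ} {D : Matrix n n ℝ}

lemma mvnPdf_sumElim (h : (fromBlocks A B Bᵀ D).PosDef) (μ₁ y₁ : m → ℝ) (μ₂ y₂ : n → ℝ) :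
    mvnPdf (Sum.elim μ₁ μ₂) (fromBlocks A B Bᵀ D) (Sum.elim y₁ y₂) =
      mvnPdf μ₁ A y₁ * mvnPdf (μ₂ + (Bᵀ * A⁻¹) *ᵥ (y₁ - μ₁)) (D - Bᵀ * A⁻¹ * B) y₂ := by
  have hA : A.PosDef := by simpa using h.toBlocks₁₁
  have hS := h.schur_of_fromBlocks
  have hcard : (2 * π) ^ (-(Fintype.card (m ⊕ n) : ℝ) / 2) =
      (2 * π) ^ (-(Fintype.card m : ℝ) / 2) * (2 * π) ^ (-(Fintype.card n : ℝ) / 2) := by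
    rw [← rpow_add (by positivity), Fintype.card_sum, Nat.cast_add]
    ring_nf
  simp only [mvnPdf, ← Sum.elim_sub_sub, sumElim_dotProduct_inv_fromBlocks_mulVec h,
    det_fromBlocks_of_isUnit_det₁₁ hA.det_pos.ne'.isUnit, mul_rpow hA.det_pos.le hS.det_pos.le,
    hcard, sub_add_eq_sub_sub, neg_add, add_div, exp_add]
  ring

end Blocks

lemma invSqrt_transpose {k : Type*} [Fintype k] [DecidableEq k] {S : Matrix k k ℝ}
    (hS : S.PosDef) : (invSqrt hS)ᵀ = invSqrt hS := by
  rw [← conjTranspose_eq_transpose_of_trivial]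
  refine IsHermitian.inv ?_
  rw [star_eq_conjTranspose]
  exact isHermitian_mul_mul_conjTranspose _ (isHermitian_diagonal _)

/-- integrating the `(n+v)`-dimensional skew-normal density over the second
block gives an `n`-dimensional skew-normal density. -/
theorem skew_normal_marginalization
    {n v : ℕ}
    (Ψ11 : Matrix (Fin n) (Fin n) ℝ) (Ψ12 : Matrix (Fin n) (Fin v) ℝ)
    (Ψ22 : Matrix (Fin v) (Fin v) ℝ)
    (hΨ : (Matrix.fromBlocks Ψ11 Ψ12 Ψ12ᵀ Ψ22).PosDef)
    (ξ1 : Fin n → ℝ) (ξ2 : Fin v → ℝ) (lbar : Fin n ⊕ Fin v → ℝ)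
    (υ : Fin n ⊕ Fin v → ℝ) (hυ : υ = invSqrt hΨ *ᵥ lbar)
    (Ψ221 : Matrix (Fin v) (Fin v) ℝ) (hΨ221 : Ψ221 = Ψ22 - Ψ12ᵀ * Ψ11⁻¹ * Ψ12)
    (υtil : Fin n → ℝ)
    (hυtil : υtil = (Real.sqrt (1 + (υ ∘ Sum.inr) ⬝ᵥ (Ψ221 *ᵥ (υ ∘ Sum.inr))))⁻¹ •
      ((υ ∘ Sum.inl) + (Ψ11⁻¹ * Ψ12) *ᵥ (υ ∘ Sum.inr))) :
    ∀ y₁ : Fin n → ℝ,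
      (∫ y₂ : Fin v → ℝ,
          2 * mvnPdf (Sum.elim ξ1 ξ2) (Matrix.fromBlocks Ψ11 Ψ12 Ψ12ᵀ Ψ22) (Sum.elim y₁ y₂) *
            stdCDF (lbar ⬝ᵥ (invSqrt hΨ *ᵥ (Sum.elim y₁ y₂ - Sum.elim ξ1 ξ2)))) =
        2 * mvnPdf ξ1 Ψ11 y₁ * stdCDF (υtil ⬝ᵥ (y₁ - ξ1)) := by
  intro y₁
  have hA : Ψ11.PosDef := by simpa using hΨ.toBlocks₁₁
  set u := υ ∘ Sum.inr
  have harg : ∀ y₂, lbar ⬝ᵥ (invSqrt hΨ *ᵥ (Sum.elim y₁ y₂ - Sum.elim ξ1 ξ2)) =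
      ((υ ∘ Sum.inl) ⬝ᵥ (y₁ - ξ1) - u ⬝ᵥ ξ2) + u ⬝ᵥ y₂ := fun y₂ ↦ by
    rw [dotProduct_mulVec, ← mulVec_transpose, invSqrt_transpose, ← hυ, ← Sum.elim_sub_sub]
    conv_lhs => rw [← Sum.elim_comp_inl_inr υ]
    rw [sumElim_dotProduct_sumElim, dotProduct_sub, dotProduct_sub]
    ring
  have hcross : u ⬝ᵥ ((Ψ12ᵀ * Ψ11⁻¹) *ᵥ (y₁ - ξ1)) = ((Ψ11⁻¹ * Ψ12) *ᵥ u) ⬝ᵥ (y₁ - ξ1) := by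
    rw [dotProduct_mulVec, ← mulVec_transpose, transpose_mul, transpose_transpose,
      transpose_nonsing_inv, ← conjTranspose_eq_transpose_of_trivial, hA.1.eq]
  simp_rw [mvnPdf_sumElim hΨ, harg, mul_assoc, integral_const_mul,
    integral_mvnPdf_mul_stdCDF hΨ.schur_of_fromBlocks, hυtil, hΨ221, smul_dotProduct,
    add_dotProduct, dotProduct_add, hcross, smul_eq_mul]
  congr 3
  ring
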